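/- arXiv:1301.5447 — 2 statements merged into one kernel-verified Lean document; each statement's English description precedes it below -/
import Mathlib

section
/- There exist constants C₁ > 0 and δ > 0 such that ∑_{m=0}^∞ |m − s| · s^m / (m+1)! ≤ C₁ √s for all s ∈ (0, δ); and there exist constants C₂ > 0 and S > 0 such that e^{−s} · ∑_{m=0}^∞ |m − s| · s^m / (m+1)! ≤ C₂ / √s for all s ≥ S. -/
/-!
Since `s^m/(m+1)! = s^(m+1)/(m+1)! / s`, the sum is `1/s` times a tail of the absolute Poisson
moment `∑' n, |n - (s+1)| s^n/n!`. The AM-GM bound `|y| ≤ (y² + s)/(2√s)` reduces this to second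
moments, and `∑' n, (n - c)² s^n/n! = ((s - c)² + s) eˢ` follows from the factorial moments
`∑' n, n(n-1)⋯(n-k+1) s^n/n! = s^k eˢ`. For `c = s + 1` this gives `(2s + 1) eˢ / (2√s)`, whence the
`1/√s` decay at infinity. Near `0`, `|m - s| s^m ≤ (m + 1) s`, so the sum is at most `e s ≤ e √s`.
-/

open Nat Real

lemma hasSum_pow_div_factorial_exp (x : ℝ) : HasSum (fun n ↦ x ^ n / n !) (exp x) := by
  rw [exp_eq_exp_ℝ]
  exact NormedSpace.expSeries_div_hasSum_exp x

lemma hasSum_descFactorial_mul_pow_div_factorial (x : ℝ) (k : ℕ) :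
    HasSum (fun n ↦ (n.descFactorial k : ℝ) * x ^ n / n !) (x ^ k * exp x) := by
  rw [← hasSum_nat_add_iff' k]
  have hlow : ∑ i ∈ Finset.range k, (i.descFactorial k : ℝ) * x ^ i / i ! = 0 :=
    Finset.sum_eq_zero fun i hi ↦ by
      simp [descFactorial_eq_zero_iff_lt.mpr (Finset.mem_range.mp hi)]
  rw [hlow, sub_zero]
  refine ((hasSum_pow_div_factorial_exp x).mul_left (x ^ k)).congr_fun fun n ↦ ?_
  have hfac := factorial_mul_descFactorial (Nat.le_add_left k n)
  rw [Nat.add_sub_cancel] at hfac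
  rw [← hfac]
  push_cast
  field_simp
  ring

lemma hasSum_sq_sub_mul_pow_div_factorial (x c : ℝ) :
    HasSum (fun n : ℕ ↦ ((n : ℝ) - c) ^ 2 * x ^ n / n !) (((x - c) ^ 2 + x) * exp x) := by
  convert ((hasSum_descFactorial_mul_pow_div_factorial x 2).add
    ((hasSum_descFactorial_mul_pow_div_factorial x 1).mul_left (1 - 2 * c))).add
    ((hasSum_pow_div_factorial_exp x).mul_left (c ^ 2)) using 1
  · ext n
    simp only [cast_descFactorial_two, descFactorial_one]
    ring
  · ring

lemma abs_le_sq_add_sq_div {t : ℝ} (ht : 0 < t) (y : ℝ) : |y| ≤ (y ^ 2 + t ^ 2) / (2 * t) := by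
  rw [le_div_iff₀ (by positivity), ← sq_abs y]
  nlinarith [two_mul_le_add_sq t |y|]

lemma hasSum_sq_sub_add_mul_pow_div_factorial_div (x c : ℝ) :
    HasSum (fun n : ℕ ↦ (((n : ℝ) - c) ^ 2 + x) * x ^ n / n ! / (2 * √x))
      (((x - c) ^ 2 + 2 * x) * exp x / (2 * √x)) := by
  rw [show ((x - c) ^ 2 + 2 * x) * exp x = ((x - c) ^ 2 + x) * exp x + x * exp x by ring]
  exact (((hasSum_sq_sub_mul_pow_div_factorial x c).add
    ((hasSum_pow_div_factorial_exp x).mul_left x)).div_const (2 * √x)).congr_fun fun n ↦ by ring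

lemma abs_sub_mul_pow_div_factorial_le {x : ℝ} (hx : 0 < x) (c : ℝ) (n : ℕ) :
    |(n : ℝ) - c| * x ^ n / n ! ≤ (((n : ℝ) - c) ^ 2 + x) * x ^ n / n ! / (2 * √x) := by
  have hsq := abs_le_sq_add_sq_div (sqrt_pos.mpr hx) ((n : ℝ) - c)
  rw [sq_sqrt hx.le] at hsq
  calc |(n : ℝ) - c| * x ^ n / n ! = |(n : ℝ) - c| * (x ^ n / n !) := mul_div_assoc ..
    _ ≤ (((n : ℝ) - c) ^ 2 + x) / (2 * √x) * (x ^ n / n !) := by gcongr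
    _ = _ := by ring

lemma summable_abs_sub_mul_pow_div_factorial {x : ℝ} (hx : 0 < x) (c : ℝ) :
    Summable (fun n : ℕ ↦ |(n : ℝ) - c| * x ^ n / n !) :=
  (hasSum_sq_sub_add_mul_pow_div_factorial_div x c).summable.of_nonneg_of_le
    (fun _ ↦ by positivity) (abs_sub_mul_pow_div_factorial_le hx c)

lemma tsum_abs_sub_mul_pow_div_factorial_le {x : ℝ} (hx : 0 < x) (c : ℝ) :
    ∑' n : ℕ, |(n : ℝ) - c| * x ^ n / n ! ≤ ((x - c) ^ 2 + 2 * x) * exp x / (2 * √x) :=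
  hasSum_le (abs_sub_mul_pow_div_factorial_le hx c)
    (summable_abs_sub_mul_pow_div_factorial hx c).hasSum
    (hasSum_sq_sub_add_mul_pow_div_factorial_div x c)

lemma abs_sub_mul_pow_div_factorial_succ_eq {x : ℝ} (hx : 0 < x) (m : ℕ) :
    |(m : ℝ) - x| * x ^ m / ((m + 1)! : ℝ)
      = |((m + 1 : ℕ) : ℝ) - (x + 1)| * x ^ (m + 1) / ((m + 1)! : ℝ) / x := by
  push_cast
  rw [show (m : ℝ) + 1 - (x + 1) = m - x by ring]
  field_simp
  ring

lemma summable_abs_sub_mul_pow_div_factorial_succ {x : ℝ} (hx : 0 < x) :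
    Summable (fun m : ℕ ↦ |(m : ℝ) - x| * x ^ m / ((m + 1)! : ℝ)) := by
  refine (((summable_nat_add_iff 1).mpr
    (summable_abs_sub_mul_pow_div_factorial hx (x + 1))).div_const x).congr fun m ↦ ?_
  exact (abs_sub_mul_pow_div_factorial_succ_eq hx m).symm

lemma tsum_abs_sub_mul_pow_div_factorial_succ_le {x : ℝ} (hx : 0 < x) :
    ∑' m : ℕ, |(m : ℝ) - x| * x ^ m / ((m + 1)! : ℝ) ≤ (2 * x + 1) * exp x / (2 * √x) / x := by
  have hbound := tsum_abs_sub_mul_pow_div_factorial_le hx (x + 1)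
  rw [(summable_abs_sub_mul_pow_div_factorial hx (x + 1)).tsum_eq_zero_add] at hbound
  rw [tsum_congr (abs_sub_mul_pow_div_factorial_succ_eq hx), tsum_div_const]
  gcongr
  have hzero : 0 ≤ |((0 : ℕ) : ℝ) - (x + 1)| * x ^ 0 / (0 ! : ℝ) := by positivity
  convert (le_add_of_nonneg_left hzero).trans hbound using 2
  ring

lemma abs_sub_mul_pow_le_of_le_one {x : ℝ} (hx₀ : 0 < x) (hx₁ : x ≤ 1) (m : ℕ) :
    |(m : ℝ) - x| * x ^ m ≤ (m + 1) * x := by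
  cases m with
  | zero => simp [abs_of_pos hx₀]
  | succ k =>
    have habs : |((k + 1 : ℕ) : ℝ) - x| ≤ (k + 1 : ℕ) + 1 := by
      rw [abs_le]; constructor <;> push_cast <;> linarith
    have hpow : x ^ (k + 1) ≤ x := pow_le_of_le_one hx₀.le hx₁ k.succ_ne_zero
    exact mul_le_mul habs hpow (by positivity) (by positivity)

lemma abs_sub_mul_pow_div_factorial_succ_le_of_le_one {x : ℝ} (hx₀ : 0 < x) (hx₁ : x ≤ 1)
    (m : ℕ) : |(m : ℝ) - x| * x ^ m / ((m + 1)! : ℝ) ≤ x * (1 ^ m / m !) := by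
  rw [one_pow, factorial_succ, cast_mul, div_le_iff₀ (by positivity)]
  calc |(m : ℝ) - x| * x ^ m ≤ (m + 1) * x := abs_sub_mul_pow_le_of_le_one hx₀ hx₁ m
    _ = x * (1 / m !) * ((m + 1 : ℕ) * m !) := by push_cast; field_simp

lemma tsum_abs_sub_mul_pow_div_factorial_succ_le_of_le_one {x : ℝ} (hx₀ : 0 < x) (hx₁ : x ≤ 1) :
    ∑' m : ℕ, |(m : ℝ) - x| * x ^ m / ((m + 1)! : ℝ) ≤ x * exp 1 :=
  hasSum_le (abs_sub_mul_pow_div_factorial_succ_le_of_le_one hx₀ hx₁)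
    (summable_abs_sub_mul_pow_div_factorial_succ hx₀).hasSum
    ((hasSum_pow_div_factorial_exp 1).mul_left x)

/-- `∑_{m=0}^∞ |m − s| s^m/(m+1)! = O(√s)` as `s → 0⁺`, and
`e^{−s} ∑_{m=0}^∞ |m − s| s^m/(m+1)! = O(1/√s)` as `s → ∞`. -/
theorem stmt2 :
    (∃ C₁ > (0:ℝ), ∃ δ > (0:ℝ), ∀ s ∈ Set.Ioo (0:ℝ) δ,
      (∑' m : ℕ, |(m : ℝ) - s| * s ^ m / ((m + 1).factorial : ℝ)) ≤ C₁ * Real.sqrt s) ∧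
    (∃ C₂ > (0:ℝ), ∃ S > (0:ℝ), ∀ s ≥ S,
      Real.exp (-s) * (∑' m : ℕ, |(m : ℝ) - s| * s ^ m / ((m + 1).factorial : ℝ)) ≤
        C₂ / Real.sqrt s) := by
  refine ⟨⟨exp 1, exp_pos 1, 1, one_pos, fun s ⟨hs₀, hs₁⟩ ↦ ?_⟩,
    ⟨3 / 2, by norm_num, 1, one_pos, fun s hs ↦ ?_⟩⟩
  · have hs_le_sqrt : s ≤ √s :=
      (le_sqrt hs₀.le hs₀.le).mpr (pow_le_of_le_one hs₀.le hs₁.le two_ne_zero)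
    calc _ ≤ s * exp 1 := tsum_abs_sub_mul_pow_div_factorial_succ_le_of_le_one hs₀ hs₁.le
      _ ≤ exp 1 * √s := by rw [mul_comm]; gcongr
  · have hs₀ : 0 < s := one_pos.trans_le hs
    calc _ ≤ exp (-s) * ((2 * s + 1) * exp s / (2 * √s) / s) := by
          gcongr
          exact tsum_abs_sub_mul_pow_div_factorial_succ_le hs₀
      _ = (2 * s + 1) / s / (2 * √s) := by
          rw [exp_neg]
          field_simp
      _ ≤ 3 / (2 * √s) := by
          gcongr
          rw [div_le_iff₀ hs₀]
          linarith
      _ = 3 / 2 / √s := by ring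
end

section
/- Let γ > 0 and b > 0. Then for every x > 0 and t > 0 one has ∫_0^∞ p^{γ,b}(x,y,t) · (y − x)² dy = 2γtx + t²·b·(b + γ). -/
/-!
With `c = γ t` and `ν = b / γ`, expanding the series shows that on `(0, ∞)` the kernel
`y ↦ p^{γ,b}(x,y,t)` is the Poisson(`x / c`) mixture of the Gamma densities with shape `m + ν`
and scale `c`. The second moment about `x` of such a Gamma density is
`(m + ν)(m + ν + 1) c² - 2 x (m + ν) c + x²`, a quadratic polynomial in `m`. All terms are
nonnegative, so the series may be integrated termwise, and the Poisson moments `E M = λ`,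
`E M² = λ² + λ` (with `λ = x / c`) reduce the sum to `2 c x + c² ν (ν + 1)`.
-/

open MeasureTheory

/-- The kernel `p^{γ,b}(x,y,t)` for `b > 0`. -/
noncomputable def pker (γ b x y t : ℝ) : ℝ :=
  (γ * t) ^ (-(b / γ)) * Real.exp (-(x + y) / (γ * t)) * y ^ (b / γ - 1) *
    ∑' m : ℕ,
      (x * y) ^ m / ((m.factorial : ℝ) * Real.Gamma ((m : ℝ) + b / γ) * (γ * t) ^ (2 * m))

open Real ProbabilityTheory Set
open scoped Nat

section ExpSeries

variable (u : ℝ)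

lemma hasSum_pow_div_factorial : HasSum (fun m : ℕ => u ^ m / m !) (exp u) := by
  simpa only [exp_eq_exp_ℝ] using NormedSpace.expSeries_div_hasSum_exp u

lemma hasSum_natCast_mul_pow_div_factorial :
    HasSum (fun m : ℕ => (m : ℝ) * (u ^ m / m !)) (u * exp u) := by
  rw [← hasSum_nat_add_iff' 1]
  have shift (m : ℕ) : ((m + 1 : ℕ) : ℝ) * (u ^ (m + 1) / (m + 1)!) = u * (u ^ m / m !) := by
    rw [Nat.factorial_succ, pow_succ]
    push_cast
    field_simp
  simpa only [shift, Finset.range_one, Finset.sum_singleton, Nat.cast_zero, zero_mul, sub_zero]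
    using (hasSum_pow_div_factorial u).mul_left u

lemma hasSum_natCast_sq_mul_pow_div_factorial :
    HasSum (fun m : ℕ => (m : ℝ) ^ 2 * (u ^ m / m !)) ((u ^ 2 + u) * exp u) := by
  rw [← hasSum_nat_add_iff' 1]
  have shift (m : ℕ) : ((m + 1 : ℕ) : ℝ) ^ 2 * (u ^ (m + 1) / (m + 1)!)
      = u * ((m : ℝ) * (u ^ m / m !) + u ^ m / m !) := by
    rw [Nat.factorial_succ, pow_succ]
    push_cast
    field_simp
    ring
  have h := ((hasSum_natCast_mul_pow_div_factorial u).add (hasSum_pow_div_factorial u)).mul_left u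
  rw [show (u ^ 2 + u) * exp u - ∑ m ∈ Finset.range 1, (m : ℝ) ^ 2 * (u ^ m / m !)
      = u * (u * exp u + exp u) by
        rw [Finset.sum_range_one, Nat.cast_zero, zero_pow two_ne_zero, zero_mul, sub_zero]; ring]
  exact h.congr_fun shift

lemma hasSum_quadratic_mul_pow_div_factorial (A B D : ℝ) :
    HasSum (fun m : ℕ => (A + B * m + D * (m : ℝ) ^ 2) * (u ^ m / m !))
      ((A + B * u + D * (u ^ 2 + u)) * exp u) := by
  have h := (((hasSum_pow_div_factorial u).mul_left A).add
    ((hasSum_natCast_mul_pow_div_factorial u).mul_left B)).add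
    ((hasSum_natCast_sq_mul_pow_div_factorial u).mul_left D)
  rw [show (A + B * u + D * (u ^ 2 + u)) * exp u
      = A * exp u + B * (u * exp u) + D * ((u ^ 2 + u) * exp u) by ring]
  exact h.congr_fun fun m => by ring

end ExpSeries

section GammaMoments

lemma gammaPDFReal_mul_pow_of_pos {s r y : ℝ} (hy : 0 < y) (n : ℕ) :
    gammaPDFReal s r y * y ^ n = r ^ s / Gamma s * (y ^ (s + n - 1) * exp (-(r * y))) := by
  rw [gammaPDFReal, if_pos hy.le, show s + n - 1 = (s - 1) + n by ring, rpow_add hy,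
    rpow_natCast]
  ring

lemma integrableOn_gammaPDFReal_mul_pow {s r : ℝ} (hs : 0 < s) (hr : 0 < r) (n : ℕ) :
    IntegrableOn (fun y => gammaPDFReal s r y * y ^ n) (Ioi 0) := by
  have h := integrableOn_rpow_mul_exp_neg_mul_rpow (p := 1) (s := s + n - 1)
    (by linarith [(n.cast_nonneg : (0 : ℝ) ≤ n)]) zero_lt_one hr
  simp only [rpow_one, neg_mul] at h
  exact IntegrableOn.congr_fun (h.const_mul (r ^ s / Gamma s))
    (fun y hy => (gammaPDFReal_mul_pow_of_pos hy n).symm) measurableSet_Ioi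

lemma integral_gammaPDFReal_mul_pow {s r : ℝ} (hs : 0 < s) (hr : 0 < r) (n : ℕ) :
    ∫ y in Ioi 0, gammaPDFReal s r y * y ^ n = Gamma (s + n) / (Gamma s * r ^ n) := by
  rw [setIntegral_congr_fun measurableSet_Ioi (fun y hy => gammaPDFReal_mul_pow_of_pos hy n),
    integral_const_mul, integral_rpow_mul_exp_neg_mul_Ioi (by positivity) hr,
    div_rpow zero_le_one hr.le, one_rpow, rpow_add hr, rpow_natCast]
  have := (Gamma_pos_of_pos hs).ne'
  have := (rpow_pos_of_pos hr s).ne'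
  field_simp

lemma gammaPDFReal_mul_sq_sub (s r x y : ℝ) :
    gammaPDFReal s r y * (y - x) ^ 2 = gammaPDFReal s r y * y ^ 2
      + (-(2 * x) * (gammaPDFReal s r y * y ^ 1) + x ^ 2 * (gammaPDFReal s r y * y ^ 0)) := by
  ring

lemma integrableOn_gammaPDFReal_mul_sq_sub {s r : ℝ} (hs : 0 < s) (hr : 0 < r) (x : ℝ) :
    IntegrableOn (fun y => gammaPDFReal s r y * (y - x) ^ 2) (Ioi 0) := by
  simp_rw [gammaPDFReal_mul_sq_sub s r x]
  exact (integrableOn_gammaPDFReal_mul_pow hs hr 2).add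
    (((integrableOn_gammaPDFReal_mul_pow hs hr 1).const_mul _).add
      ((integrableOn_gammaPDFReal_mul_pow hs hr 0).const_mul _))

lemma integral_gammaPDFReal_mul_sq_sub {s r : ℝ} (hs : 0 < s) (hr : 0 < r) (x : ℝ) :
    ∫ y in Ioi 0, gammaPDFReal s r y * (y - x) ^ 2
      = s * (s + 1) / r ^ 2 - 2 * x * s / r + x ^ 2 := by
  have i0 := integrableOn_gammaPDFReal_mul_pow hs hr 0
  have i1 := integrableOn_gammaPDFReal_mul_pow hs hr 1
  have i2 := integrableOn_gammaPDFReal_mul_pow hs hr 2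
  simp_rw [gammaPDFReal_mul_sq_sub s r x]
  rw [integral_add i2 ?sum, integral_add (i1.const_mul _) (i0.const_mul _), integral_const_mul,
    integral_const_mul]
  case sum => exact (i1.const_mul _).add (i0.const_mul _)
  simp only [integral_gammaPDFReal_mul_pow hs hr]
  rw [show s + ((2 : ℕ) : ℝ) = s + 1 + 1 by push_cast; ring, Nat.cast_one, Nat.cast_zero, add_zero,
    Gamma_add_one (by positivity), Gamma_add_one hs.ne']
  have := (Gamma_pos_of_pos hs).ne'
  field_simp
  ring

end GammaMoments

noncomputable def poissonGammaMixturePDF (u ν r y : ℝ) : ℝ :=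
  exp (-u) * ∑' m : ℕ, u ^ m / m ! * gammaPDFReal (m + ν) r y

lemma pker_eq_poissonGammaMixturePDF {γ t : ℝ} (hc : 0 < γ * t) (b x : ℝ) {y : ℝ} (hy : 0 < y) :
    pker γ b x y t = poissonGammaMixturePDF (x / (γ * t)) (b / γ) (γ * t)⁻¹ y := by
  rw [pker, poissonGammaMixturePDF, ← tsum_mul_left, ← tsum_mul_left]
  generalize γ * t = c at hc ⊢
  generalize b / γ = ν
  have hexp : exp (-(x + y) / c) = exp (-(x / c)) * exp (-(c⁻¹ * y)) := by
    rw [← exp_add]; ring_nf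
  refine tsum_congr fun m => ?_
  rw [gammaPDFReal, if_pos hy.le, show (m : ℝ) + ν - 1 = (ν - 1) + m by ring, rpow_add hy,
    rpow_natCast, inv_rpow hc.le, rpow_add hc, rpow_natCast, rpow_neg hc.le, hexp, pow_mul]
  ring

lemma integral_poissonGammaMixturePDF_mul_sq_sub {u ν r : ℝ} (hu : 0 ≤ u) (hν : 0 < ν)
    (hr : 0 < r) (x : ℝ) :
    ∫ y in Ioi 0, poissonGammaMixturePDF u ν r y * (y - x) ^ 2
      = ((u + ν) * (u + ν + 1) + u) / r ^ 2 - 2 * x * (u + ν) / r + x ^ 2 := by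
  set F : ℕ → ℝ → ℝ := fun m y => u ^ m / m ! * (gammaPDFReal (m + ν) r y * (y - x) ^ 2)
  have hs (m : ℕ) : 0 < (m : ℝ) + ν := by positivity
  have hF_int (m : ℕ) : IntegrableOn (F m) (Ioi 0) :=
    (integrableOn_gammaPDFReal_mul_sq_sub (hs m) hr x).const_mul _
  have hF_nonneg (m : ℕ) (y : ℝ) : 0 ≤ F m y :=
    mul_nonneg (by positivity) (mul_nonneg (gammaPDFReal_nonneg (hs m) hr y) (sq_nonneg _))
  have hF_integral (m : ℕ) : ∫ y in Ioi 0, F m y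
      = ((ν * (ν + 1) / r ^ 2 - 2 * x * ν / r + x ^ 2) + ((2 * ν + 1) / r ^ 2 - 2 * x / r) * m
          + 1 / r ^ 2 * (m : ℝ) ^ 2) * (u ^ m / m !) := by
    rw [integral_const_mul, integral_gammaPDFReal_mul_sq_sub (hs m) hr]
    ring
  have hsum := hasSum_quadratic_mul_pow_div_factorial u (ν * (ν + 1) / r ^ 2 - 2 * x * ν / r + x ^ 2)
    ((2 * ν + 1) / r ^ 2 - 2 * x / r) (1 / r ^ 2)
  have hF_sum : Summable fun m => ∫ y in Ioi 0, ‖F m y‖ := by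
    simp_rw [Real.norm_of_nonneg (hF_nonneg _ _), hF_integral]
    exact hsum.summable
  have hint := hasSum_integral_of_summable_integral_norm hF_int hF_sum
  simp_rw [hF_integral] at hint
  have hmix (y : ℝ) : poissonGammaMixturePDF u ν r y * (y - x) ^ 2 = exp (-u) * ∑' m, F m y := by
    rw [poissonGammaMixturePDF, mul_assoc, ← tsum_mul_right]
    simp_rw [F, mul_assoc]
  simp_rw [hmix]
  rw [integral_const_mul, ← hsum.unique hint, ← mul_assoc, mul_comm (exp (-u)), mul_assoc,
    ← exp_add, neg_add_cancel, exp_zero]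
  ring

/-- For `γ > 0`, `b > 0`, `x > 0` and `t > 0`,
`∫_0^∞ p^{γ,b}(x,y,t)(y − x)² dy = 2γtx + t²b(b + γ)`. -/
theorem stmt7 (γ b : ℝ) (hγ : 0 < γ) (hb : 0 < b) (x t : ℝ) (hx : 0 < x) (ht : 0 < t) :
    ∫ y in Set.Ioi (0:ℝ), pker γ b x y t * (y - x) ^ 2 =
      2 * γ * t * x + t ^ 2 * b * (b + γ) := by
  have hc : 0 < γ * t := mul_pos hγ ht
  rw [setIntegral_congr_fun measurableSet_Ioi
      (fun y hy => by rw [pker_eq_poissonGammaMixturePDF hc b x hy]),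
    integral_poissonGammaMixturePDF_mul_sq_sub (by positivity) (by positivity) (inv_pos.mpr hc)]
  field_simp
  ring
end
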